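/- arXiv:2408.06981 — 2 statements merged into one kernel-verified Lean document; each statement's English description precedes it below -/
import Mathlib

section
/- With x_{i,r} := ((-1)^r f_i - e_{τi}) z^r and ξ_{i,r} := (h_{τi} - (-1)^r h_i) z^r in 𝔤[z], if c_{i,τi} = 0 and τi ≠ i then [x_{i,r}, x_{τi,s}] = (-1)^r ξ_{τi, r+s} for all r, s ∈ ℕ. -/
open scoped TensorProduct

/-- With `x_{i,r} = z^r ⊗ ((-1)^r f_i - e_{τi})` and
`ξ_{i,r} = z^r ⊗ (h_{τi} - (-1)^r h_i)` in the current algebra, if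
`c_{i,τi} = 0` and `τi ≠ i`, then `[x_{i,r}, x_{τi,s}] = (-1)^r ξ_{τi,r+s}`. -/
theorem current_x_xtau_relation
    (L I : Type*) [LieRing L] [LieAlgebra ℂ L]
    (e f h : I → L) (τ : I → I) (c : I → I → ℂ)
    (i : I) (hτ : τ (τ i) = i) (hc : c i (τ i) = 0) (hne : τ i ≠ i)
    (hef_i : ⁅e i, f i⁆ = h i)
    (hef_τ : ⁅e (τ i), f (τ i)⁆ = h (τ i))
    (hff : ⁅f i, f (τ i)⁆ = 0)
    (hee : ⁅e (τ i), e i⁆ = 0)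
    (r s : ℕ) :
    ⁅((Polynomial.X ^ r : Polynomial ℂ) ⊗ₜ[ℂ] (((-1 : ℂ) ^ r) • f i - e (τ i))
        : Polynomial ℂ ⊗[ℂ] L),
      (Polynomial.X ^ s : Polynomial ℂ) ⊗ₜ[ℂ]
        (((-1 : ℂ) ^ s) • f (τ i) - e (τ (τ i)))⁆
    = ((-1 : ℂ) ^ r) •
        ((Polynomial.X ^ (r + s) : Polynomial ℂ) ⊗ₜ[ℂ]
          (h (τ (τ i)) - ((-1 : ℂ) ^ (r + s)) • h (τ i))) := by
  rw [hτ]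
  rw [LieAlgebra.ExtendScalars.bracket_tmul, ← pow_add]
  rw [← TensorProduct.tmul_smul]
  congr 1
  have h1 : ⁅f i, e i⁆ = -h i := by rw [← lie_skew, hef_i]
  simp only [lie_sub, sub_lie, smul_lie, lie_smul, hff, h1, hee, hef_τ, smul_zero,
    zero_sub, smul_neg, neg_neg, sub_zero, smul_sub, smul_smul]
  rw [← pow_add, show r + (r + s) = 2 * r + s by ring, pow_add, pow_mul]
  norm_num
  abel
end

section
/- Consider a 2×2 matrix S(u) = F(u) D(u) E(u) with Gauss decomposition F(u) = [[1,0],[f(u),1]], D(u) = diag(d₁(u), d₂(u)), E(u) = [[1, e(u)],[0,1]], where all entries are formal series over an associative algebra and d₁, d₂ are invertible. If additionally S(u)^{-1} = c(u)^{-1} G S(-u) G with G = [[0,1],[1,0]] and c(u) central invertible (the quasi-split type AIII symmetry for N = 2), then e(u) = -f(-u) and c(u) d₂(u)^{-1} = d₁(-u). -/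
/-- For the 2×2 Gauss decomposition `S = F D E` with the quasi-split type AIII
symmetry `s_{i'j'}(-u) = c(u) s̃_{ij}(u)` (here `ν` is the substitution
`u ↦ -u`, an algebra involution, and `Sinv = S⁻¹`), one has
`c(u) d̃₂(u) = d₁(-u)` and `e(u) = -f(-u)`. -/
theorem gauss_symmetry_N2
    (R : Type*) [Ring R] [Algebra ℂ R]
    (ν : R →ₐ[ℂ] R) (hν : ∀ x, ν (ν x) = x)
    (d₁ d₂ e f d₁i d₂i c ci : R)
    (hd₁ : d₁ * d₁i = 1 ∧ d₁i * d₁ = 1)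
    (hd₂ : d₂ * d₂i = 1 ∧ d₂i * d₂ = 1)
    (hc : c * ci = 1 ∧ ci * c = 1)
    (hcentral : ∀ x, c * x = x * c)
    (Smat : Matrix (Fin 2) (Fin 2) R)
    (hSmat : Smat = !![d₁, d₁ * e; f * d₁, f * d₁ * e + d₂])
    (Sinv : Matrix (Fin 2) (Fin 2) R)
    (hSinv₁ : Smat * Sinv = 1) (hSinv₂ : Sinv * Smat = 1)
    (hsym : ∀ i j : Fin 2, ν (Smat (Fin.rev i) (Fin.rev j)) = c * Sinv i j) :
    c * d₂i = ν d₁ ∧ e = - ν f := by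
  obtain ⟨hd₁a, hd₁b⟩ := hd₁
  obtain ⟨hd₂a, hd₂b⟩ := hd₂
  set F : Matrix (Fin 2) (Fin 2) R := !![1, 0; f, 1] with hF
  set D : Matrix (Fin 2) (Fin 2) R := !![d₁, 0; 0, d₂] with hD
  set E : Matrix (Fin 2) (Fin 2) R := !![1, e; 0, 1] with hE
  set Fi : Matrix (Fin 2) (Fin 2) R := !![1, 0; -f, 1] with hFi
  set Di : Matrix (Fin 2) (Fin 2) R := !![d₁i, 0; 0, d₂i] with hDi
  set Ei : Matrix (Fin 2) (Fin 2) R := !![1, -e; 0, 1] with hEi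
  have hFDE : Smat = F * D * E := by
    rw [hSmat, hF, hD, hE]
    ext i j
    fin_cases i <;> fin_cases j <;>
      simp [Matrix.mul_apply, Fin.sum_univ_two, mul_assoc]
  have hEEi : E * Ei = 1 := by
    rw [hE, hEi]; ext i j
    fin_cases i <;> fin_cases j <;>
      simp [Matrix.mul_apply, Fin.sum_univ_two, Matrix.one_apply]
  have hDDi : D * Di = 1 := by
    rw [hD, hDi]; ext i j
    fin_cases i <;> fin_cases j <;>
      simp [Matrix.mul_apply, Fin.sum_univ_two, Matrix.one_apply, hd₁a, hd₂a]
  have hFFi : F * Fi = 1 := by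
    rw [hF, hFi]; ext i j
    fin_cases i <;> fin_cases j <;>
      simp [Matrix.mul_apply, Fin.sum_univ_two, Matrix.one_apply]
  set C : Matrix (Fin 2) (Fin 2) R := Ei * Di * Fi with hC
  have hSC : Smat * C = 1 := by
    rw [hFDE, hC]
    calc F * D * E * (Ei * Di * Fi)
        = F * D * (E * Ei) * Di * Fi := by noncomm_ring
      _ = F * (D * Di) * Fi := by rw [hEEi]; noncomm_ring
      _ = F * Fi := by rw [hDDi]; noncomm_ring
      _ = 1 := hFFi
  have hCeq : Sinv = C := by
    calc Sinv = Sinv * (Smat * C) := by rw [hSC, mul_one]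
    _ = (Sinv * Smat) * C := by rw [mul_assoc]
    _ = C := by rw [hSinv₂, one_mul]
  have hCval : C = !![d₁i + e * (d₂i * f), -(e * d₂i); -(d₂i * f), d₂i] := by
    rw [hC, hEi, hDi, hFi]
    ext i j
    fin_cases i <;> fin_cases j <;>
      simp [Matrix.mul_apply, Fin.sum_univ_two, mul_assoc]
  have h11 := hsym 1 1
  have h10 := hsym 1 0
  rw [hCeq, hCval, hSmat] at h11 h10
  simp [Fin.rev] at h11 h10
  refine ⟨h11.symm, ?_⟩
  have key : ν d₁ * ν e = -(ν d₁ * f) := by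
    rw [h10, ← mul_assoc, ← h11]
  have hne : ν e = -f := by
    have := congrArg (fun x => ν d₁i * x) key
    simpa [← mul_assoc, ← map_mul, hd₁b, mul_neg] using this
  have := congrArg ν hne
  simpa [hν, map_neg] using this
end
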